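/- arXiv:2007.15549 — 3 statements merged into one kernel-verified Lean document; each statement's English description precedes it below -/
import Mathlib

section
/- Let n ≥ 1 and let β : ℝ^{1+n} → ℂ be integrable with compact support. If the Fourier transform β̂(τ,ξ) = 0 for every (τ,ξ) ∈ ℝ × ℝⁿ with |τ| ≤ ‖ξ‖, then β = 0 almost everywhere. -/
/-!
Fix a frequency `(τ, ξ)` and a unit vector `v`. Since `β` has compact support, the function
`r ↦ β̂(τ, ξ + r v)` extends to an entire function of `r` (Paley–Wiener). For real
`r ≥ |τ| + ‖ξ‖` the frequency `(τ, ξ + r v)` is spacelike, so this entire function vanishes on a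
real ray, hence everywhere; at `r = 0` this gives `β̂(τ, ξ) = 0`. Thus `β̂ ≡ 0`, and injectivity
of the Fourier transform on `L¹` gives `β = 0` almost everywhere.
-/

open MeasureTheory Complex Filter
open scoped Topology RealInnerProductSpace FourierTransform SchwartzMap

lemma norm_cexp_mul_ofReal_le (w : ℂ) {r R : ℝ} (hr : |r| ≤ R) :
    ‖cexp (w * r)‖ ≤ Real.exp (‖w‖ * R) := by
  rw [norm_exp, re_mul_ofReal, Real.exp_le_exp]
  calc w.re * r ≤ |w.re| * |r| := by rw [← abs_mul]; exact le_abs_self _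
    _ ≤ ‖w‖ * R := mul_le_mul (abs_re_le_norm w) hr (abs_nonneg r) (norm_nonneg w)

theorem differentiable_integral_cexp_mul_mul {α : Type*} [MeasurableSpace α] {μ : Measure α}
    {φ : α → ℝ} {g : α → ℂ} {R : ℝ} (hφ : AEMeasurable φ μ) (hg : Integrable g μ)
    (hR : ∀ x, g x ≠ 0 → |φ x| ≤ R) :
    Differentiable ℂ fun w : ℂ => ∫ x, cexp (w * φ x) * g x ∂μ := by
  intro w₀
  have hbound : ∀ w x, ‖cexp (w * φ x) * g x‖ ≤ Real.exp (‖w‖ * R) * ‖g x‖ := by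
    intro w x
    rw [norm_mul]
    by_cases hx : g x = 0
    · simp [hx]
    · exact mul_le_mul_of_nonneg_right (norm_cexp_mul_ofReal_le w (hR x hx)) (norm_nonneg _)
  have hmeas : ∀ w : ℂ, AEStronglyMeasurable (fun x => cexp (w * φ x) * g x) μ := fun w =>
    (by fun_prop : AEMeasurable (fun x => cexp (w * φ x)) μ).aestronglyMeasurable.mul hg.1
  refine (hasDerivAt_integral_of_dominated_loc_of_deriv_le (𝕜 := ℂ)
    (F' := fun w x => φ x * (cexp (w * φ x) * g x))
    (bound := fun x => R * (Real.exp ((‖w₀‖ + 1) * R) * ‖g x‖))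
    (Metric.ball_mem_nhds w₀ one_pos) (.of_forall hmeas)
    ((hg.norm.const_mul _).mono' (hmeas w₀) (.of_forall (hbound w₀)))
    ((by fun_prop : AEMeasurable (fun x => (φ x : ℂ)) μ).aestronglyMeasurable.mul (hmeas w₀))
    (.of_forall fun x w hw => ?_) ((hg.norm.const_mul _).const_mul _)
    (.of_forall fun x w _ => ?_)).2.differentiableAt
  · rw [norm_mul, Complex.norm_real, Real.norm_eq_abs]
    by_cases hx : g x = 0
    · simp [hx]
    have hφx := hR x hx
    have hw' : ‖w‖ ≤ ‖w₀‖ + 1 := by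
      have := norm_le_norm_add_norm_sub' w w₀
      rw [Metric.mem_ball, dist_eq_norm] at hw
      linarith
    have hexp : Real.exp (‖w‖ * R) ≤ Real.exp ((‖w₀‖ + 1) * R) :=
      Real.exp_le_exp.2 (mul_le_mul_of_nonneg_right hw' ((abs_nonneg _).trans hφx))
    gcongr
    · exact (abs_nonneg _).trans hφx
    · exact (hbound w x).trans (by gcongr)
  · exact (((hasDerivAt_mul_const (φ x : ℂ)).cexp).mul_const (g x)).congr_deriv (by ring)

theorem Differentiable.eq_zero_of_forall_ofReal_ge {E : Type*} [NormedAddCommGroup E]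
    [NormedSpace ℂ E] [CompleteSpace E] {f : ℂ → E} (hf : Differentiable ℂ f) {c : ℝ}
    (h : ∀ r : ℝ, c ≤ r → f r = 0) : f = 0 := by
  have hray : Tendsto ((↑) : ℝ → ℂ) (𝓝[>] c) (𝓝[≠] (c : ℂ)) :=
    tendsto_nhdsWithin_of_tendsto_nhds_of_eventually_within _
      continuous_ofReal.continuousWithinAt.tendsto
      (eventually_nhdsWithin_of_forall fun r hr => by simpa using hr.ne')
  have hfreq : ∃ᶠ z in 𝓝[≠] (c : ℂ), f z = 0 :=
    hray.frequently (eventually_nhdsWithin_of_forall (s := Set.Ioi c) fun r hr =>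
      h r (le_of_lt hr)).frequently
  funext z
  exact (hf.differentiableOn.analyticOnNhd isOpen_univ)
    |>.eqOn_zero_of_preconnected_of_frequently_eq_zero isPreconnected_univ (Set.mem_univ _)
      hfreq (Set.mem_univ z)

theorem MeasureTheory.Integrable.ae_eq_zero_of_fourier_eq_zero {V F : Type*}
    [NormedAddCommGroup V] [InnerProductSpace ℝ V] [FiniteDimensional ℝ V]
    [MeasurableSpace V] [BorelSpace V]
    [NormedAddCommGroup F] [NormedSpace ℂ F] [CompleteSpace F]
    {f : V → F} (hf : Integrable f) (h : 𝓕 f = 0) : f =ᵐ[volume] 0 := by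
  refine ae_eq_zero_of_integral_contDiff_smul_eq_zero hf.locallyIntegrable fun g hg hgs => ?_
  let G : 𝓢(V, ℂ) := (hgs.comp_left ofReal_zero).toSchwartzMap (ofRealCLM.contDiff.comp hg)
  calc ∫ x, g x • f x = ∫ x, 𝓕 (𝓕⁻ G) x • f x := by
        simp only [FourierTransform.fourier_fourierInv_eq]
        exact integral_congr_ae (.of_forall fun x => (Complex.coe_smul _ _).symm)
    _ = ∫ x, 𝓕⁻ G x • 𝓕 f x := by
        have := VectorFourier.integral_fourierIntegral_smul_eq_flip (L := innerₗ V)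
          Real.continuous_fourierChar continuous_inner ((𝓕⁻ G).integrable (μ := volume)) hf
        rwa [flip_innerₗ] at this
    _ = 0 := by simp [h]

section Spacetime

variable {E : Type*} [NormedAddCommGroup E] [InnerProductSpace ℝ E] [MeasurableSpace E]

noncomputable def spacetimeFourier (μ : Measure (ℝ × E)) (β : ℝ × E → ℂ) (ζ : ℝ × E) : ℂ :=
  ∫ z, cexp (I * ((ζ.1 * z.1 + ⟪ζ.2, z.2⟫ : ℝ) : ℂ)) * β z ∂μ

lemma spacetimeFourier_add_smul (μ : Measure (ℝ × E)) (β : ℝ × E → ℂ) (τ : ℝ) (ξ v : E) (r : ℝ) :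
    spacetimeFourier μ β (τ, ξ + r • v) =
      ∫ z, cexp ((I * r) * ⟪v, z.2⟫) * (cexp (I * ((τ * z.1 + ⟪ξ, z.2⟫ : ℝ) : ℂ)) * β z) ∂μ := by
  refine integral_congr_ae (.of_forall fun z => ?_)
  simp only [inner_add_left, inner_smul_left, RCLike.conj_to_real]
  rw [← mul_assoc, ← Complex.exp_add]
  push_cast
  ring_nf

theorem spacetimeFourier_eq_zero_of_forall_spacelike [Nontrivial E] [OpensMeasurableSpace E]
    [SecondCountableTopology E] {μ : Measure (ℝ × E)} {β : ℝ × E → ℂ}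
    (hβ : Integrable β μ) (hβs : HasCompactSupport β)
    (h : ∀ ζ : ℝ × E, |ζ.1| ≤ ‖ζ.2‖ → spacetimeFourier μ β ζ = 0) :
    spacetimeFourier μ β = 0 := by
  ext ⟨τ, ξ⟩
  obtain ⟨v, hv⟩ := exists_norm_eq E zero_le_one
  set g : ℝ × E → ℂ := fun z => cexp (I * ((τ * z.1 + ⟪ξ, z.2⟫ : ℝ) : ℂ)) * β z
  have hg : Integrable g μ :=
    hβ.bdd_mul (c := 1) (by fun_prop) (.of_forall fun z => (norm_exp_I_mul_ofReal _).le)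
  obtain ⟨R, hR⟩ := hβs.isCompact.exists_bound_of_continuousOn
    (f := fun z : ℝ × E => ⟪v, z.2⟫) (by fun_prop)
  have hgR : ∀ z, g z ≠ 0 → |⟪v, z.2⟫| ≤ R := fun z hz =>
    Real.norm_eq_abs _ ▸ hR z (subset_tsupport β (right_ne_zero_of_mul hz))
  have hdiff : Differentiable ℂ fun w : ℂ => ∫ z, cexp (I * w * ⟪v, z.2⟫) * g z ∂μ :=
    (differentiable_integral_cexp_mul_mul (by fun_prop) hg hgR).comp
      (differentiable_id.const_mul I)
  have hline := hdiff.eq_zero_of_forall_ofReal_ge (c := |τ| + ‖ξ‖) fun r hr => by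
    rw [← spacetimeFourier_add_smul]
    apply h
    calc |τ| ≤ r - ‖ξ‖ := by linarith
      _ = ‖r • v‖ - ‖ξ‖ := by
        rw [norm_smul, hv, mul_one, Real.norm_of_nonneg (by linarith [abs_nonneg τ, norm_nonneg ξ])]
      _ ≤ ‖ξ + r • v‖ := by
        have := norm_sub_le (ξ + r • v) ξ
        rw [add_sub_cancel_left] at this
        linarith
  simpa [spacetimeFourier, g] using congrFun hline 0

variable [FiniteDimensional ℝ E] [BorelSpace E]

-- `𝓕` needs an inner product space, and `ℝ × E` carries the sup norm: we pass to the
-- Euclidean product `WithLp 2 (ℝ × E)`, which has the same volume.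
lemma fourier_comp_ofLp (β : ℝ × E → ℂ) (w : WithLp 2 (ℝ × E)) :
    𝓕 (β ∘ @WithLp.ofLp 2 (ℝ × E)) w =
      spacetimeFourier volume β (-(2 * Real.pi) • WithLp.ofLp w) := by
  rw [Real.fourier_eq', spacetimeFourier, ← (WithLp.volume_preserving_ofLp ℝ E).integral_comp
    (MeasurableEquiv.toLp 2 (ℝ × E)).symm.measurableEmbedding]
  refine integral_congr_ae (.of_forall fun v => ?_)
  simp only [WithLp.prod_inner_apply, Function.comp_apply, smul_eq_mul, Prod.smul_fst,
    Prod.smul_snd, real_inner_smul_right, RCLike.inner_apply, conj_trivial,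
    real_inner_comm v.ofLp.2]
  congr 2
  push_cast
  ring

theorem ae_eq_zero_of_spacetimeFourier_eq_zero {β : ℝ × E → ℂ} (hβ : Integrable β)
    (h : spacetimeFourier volume β = 0) : β =ᵐ[volume] 0 := by
  have hf : Integrable (β ∘ @WithLp.ofLp 2 (ℝ × E)) :=
    (WithLp.volume_preserving_ofLp ℝ E).integrable_comp_emb
      (MeasurableEquiv.toLp 2 (ℝ × E)).symm.measurableEmbedding |>.2 hβ
  have hzero := hf.ae_eq_zero_of_fourier_eq_zero (funext fun w => by
    rw [fourier_comp_ofLp, h]; rfl)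
  exact (WithLp.volume_preserving_toLp ℝ E).quasiMeasurePreserving.ae_eq_comp hzero

end Spacetime

/-- If `β : ℝ^{1+n} → ℂ` is integrable with compact support and its Fourier
transform `β̂(τ,ξ) = ∫ e^{i(τt + ⟪ξ,x⟫)} β(t,x) dt dx` vanishes for every space-like
vector `(τ,ξ)` with `|τ| ≤ ‖ξ‖`, then `β = 0` almost everywhere. -/
theorem statement3 (n : ℕ) (hn : 1 ≤ n)
    (β : ℝ × EuclideanSpace ℝ (Fin n) → ℂ) (hβ : Integrable β)
    (hβs : HasCompactSupport β)
    (h : ∀ ζ : ℝ × EuclideanSpace ℝ (Fin n), |ζ.1| ≤ ‖ζ.2‖ →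
      (∫ z : ℝ × EuclideanSpace ℝ (Fin n),
        Complex.exp (Complex.I * ((ζ.1 * z.1 + ⟪ζ.2, z.2⟫ : ℝ) : ℂ)) * β z) = 0) :
    ∀ᵐ z : ℝ × EuclideanSpace ℝ (Fin n), β z = 0 := by
  have : Nonempty (Fin n) := ⟨⟨0, hn⟩⟩
  exact ae_eq_zero_of_spacetimeFourier_eq_zero hβ
    (spacetimeFourier_eq_zero_of_forall_spacelike hβ hβs h)
end

section
/- Let n ≥ 2 and let β : ℝ^{1+n} → ℂ be continuous with compact support. If ∫_ℝ β(t, y − tω) dt = 0 for every y ∈ ℝⁿ and every unit vector ω ∈ ℝⁿ, then β(t,x) = 0 for all (t,x) ∈ ℝ^{1+n}. -/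
/-!
Fourier transforming in `x`, the vanishing of the light ray transform in the direction `ω` says
that the space-time Fourier transform `β̂ (τ, ξ)` vanishes on the hyperplane `τ = ⟪ω, ξ⟫`
(Fourier slice theorem). When `n ≥ 2`, every `(τ, ξ)` with `|τ| ≤ ‖ξ‖` lies on such a hyperplane
for some unit vector `ω`, so for fixed `ξ ≠ 0` the function `τ ↦ β̂ (τ, ξ)` vanishes on an
interval. Because `β` has compact support in `t`, this function extends to an entire function of
`τ` (Paley–Wiener), hence vanishes identically. Fourier inversion in `t` and then in `x`,
together with continuity of the Fourier transform at `ξ = 0`, gives `β = 0`.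
-/

open MeasureTheory Filter Complex
open scoped RealInnerProductSpace FourierTransform Topology Real

section Slices

variable {X Y E : Type*} [TopologicalSpace X] [TopologicalSpace Y] [NormedAddCommGroup E]
  {f : X × Y → E}

theorem HasCompactSupport.comp_prodMk_right [R1Space Y] (hf : HasCompactSupport f) (x : X) :
    HasCompactSupport fun y => f (x, y) :=
  .of_support_subset_isCompact (hf.image continuous_snd) fun y hy =>
    ⟨(x, y), subset_tsupport f hy, rfl⟩

variable [NormedSpace ℝ E] [MeasurableSpace Y] {μ : Measure Y}

theorem HasCompactSupport.integral_prodMk [R1Space X] (hf : HasCompactSupport f) :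
    HasCompactSupport fun x => ∫ y, f (x, y) ∂μ :=
  .of_support_subset_isCompact (hf.image continuous_fst) fun x hx => by
    obtain ⟨y, hy⟩ : ∃ y, f (x, y) ≠ 0 := by
      by_contra! h
      simp [h] at hx
    exact ⟨(x, y), subset_tsupport f hy, rfl⟩

theorem HasCompactSupport.continuous_integral_prodMk [FirstCountableTopology X]
    [LocallyCompactSpace X] [OpensMeasurableSpace Y] [SecondCountableTopologyEither Y E]
    [IsLocallyFiniteMeasure μ] (hf : HasCompactSupport f) (hc : Continuous f) :
    Continuous fun x => ∫ y, f (x, y) ∂μ := by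
  have hK := hf.image continuous_snd
  convert continuous_parametric_integral_of_continuous (μ := μ) (f := fun x y => f (x, y)) hc hK
    using 2 with x
  refine (setIntegral_eq_integral_of_forall_compl_eq_zero fun y hy => ?_).symm
  by_contra h
  exact hy ⟨(x, y), subset_tsupport f h, rfl⟩

end Slices

theorem exists_norm_eq_one_inner_eq {E : Type*} [NormedAddCommGroup E] [InnerProductSpace ℝ E]
    (hE : 1 < Module.rank ℝ E) (ξ : E) {τ : ℝ} (hτ : |τ| ≤ ‖ξ‖) :
    ∃ ω, ‖ω‖ = 1 ∧ ⟪ω, ξ⟫ = τ := by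
  have hS := isConnected_sphere hE 0 zero_le_one
  rcases eq_or_ne ξ 0 with rfl | hξ
  · obtain ⟨ω, hω⟩ := hS.nonempty
    refine ⟨ω, by simpa using hω, ?_⟩
    simp_all
  set u := ‖ξ‖⁻¹ • ξ
  have hu : u ∈ Metric.sphere (0 : E) 1 := by simp [u, norm_smul, hξ]
  have hui : ⟪u, ξ⟫ = ‖ξ‖ := by
    simp [u, real_inner_smul_left, hξ, pow_two]
  obtain ⟨ω, hω, rfl⟩ := hS.isPreconnected.intermediate_value (a := -u) (b := u)
    (f := fun ω => ⟪ω, ξ⟫) (by simpa using hu) hu (by fun_prop)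
    (by simpa [inner_neg_left, hui, abs_le] using hτ)
  exact ⟨ω, by simpa using hω, rfl⟩

section Fourier

variable {F : Type*} [NormedAddCommGroup F] [NormedSpace ℂ F]

theorem MeasureTheory.Integrable.circle_smul {α : Type*} [MeasurableSpace α] {μ : Measure α}
    {f : α → F} (hf : Integrable f μ) {φ : α → Circle} (hφ : AEStronglyMeasurable φ μ) :
    Integrable (fun a => φ a • f a) μ := by
  refine (integrable_norm_iff (hφ.fun_smul hf.1)).1 ?_
  simpa only [Circle.norm_smul] using hf.norm

theorem differentiable_integral_cexp_mul_smul {g : ℝ → F} (hg : Integrable g)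
    (hgs : HasCompactSupport g) :
    Differentiable ℂ fun z : ℂ => ∫ t : ℝ, cexp (z * t) • g t := by
  obtain ⟨R, hR0, hR⟩ := hgs.isCompact.isBounded.exists_pos_norm_le
  have hsupp : ∀ t, g t ≠ 0 → ‖(t : ℂ)‖ ≤ R := fun t ht => by
    simpa using hR t (subset_tsupport g ht)
  intro z₀
  set C := Real.exp ((‖z₀‖ + 1) * R)
  have hcexp : ∀ z ∈ Metric.ball z₀ 1, ∀ t, g t ≠ 0 → ‖cexp (z * t)‖ ≤ C := by
    intro z hz t ht
    refine (norm_exp_le_exp_norm _).trans (Real.exp_le_exp.2 ?_)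
    rw [norm_mul]
    exact mul_le_mul (norm_lt_of_mem_ball hz).le (hsupp t ht) (norm_nonneg _) (by positivity)
  have hbound : ∀ z ∈ Metric.ball z₀ 1, ∀ t : ℝ,
      ‖cexp (z * t) • g t‖ ≤ C * ‖g t‖ := by
    intro z hz t
    by_cases ht : g t = 0
    · simp [ht]
    rw [norm_smul]
    exact mul_le_mul_of_nonneg_right (hcexp z hz t ht) (norm_nonneg _)
  have hbound_deriv : ∀ z ∈ Metric.ball z₀ 1, ∀ t : ℝ,
      ‖((t : ℂ) * cexp (z * t)) • g t‖ ≤ R * C * ‖g t‖ := by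
    intro z hz t
    by_cases ht : g t = 0
    · simp [ht]
    rw [norm_smul, norm_mul]
    refine mul_le_mul_of_nonneg_right ?_ (norm_nonneg _)
    exact mul_le_mul (hsupp t ht) (hcexp z hz t ht) (norm_nonneg _) hR0.le
  have hmeas (z : ℂ) : AEStronglyMeasurable fun t : ℝ => cexp (z * t) • g t :=
    (by fun_prop : Continuous fun t : ℝ => cexp (z * t)).aestronglyMeasurable.smul hg.1
  have hmeas_deriv : AEStronglyMeasurable fun t : ℝ => ((t : ℂ) * cexp (z₀ * t)) • g t :=
    (by fun_prop : Continuous fun t : ℝ => (t : ℂ) * cexp (z₀ * t)).aestronglyMeasurable.smul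
      hg.1
  have hderiv (t : ℝ) (z : ℂ) :
      HasDerivAt (fun z => cexp (z * t) • g t) (((t : ℂ) * cexp (z * t)) • g t) z :=
    (((hasDerivAt_id z).mul_const (t : ℂ)).cexp.smul_const (g t)).congr_deriv (by simp [mul_comm])
  exact (hasDerivAt_integral_of_dominated_loc_of_deriv_le (Metric.ball_mem_nhds z₀ one_pos)
    (Eventually.of_forall hmeas)
    ((hg.norm.const_mul C).mono' (hmeas z₀)
      (ae_of_all _ (hbound z₀ (Metric.mem_ball_self one_pos))))
    hmeas_deriv (ae_of_all _ fun t z hz => hbound_deriv z hz t) (hg.norm.const_mul _)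
    (ae_of_all _ fun t z _ => hderiv t z)).2.differentiableAt

variable [CompleteSpace F]

theorem eq_zero_of_fourier_eq_zero {V : Type*} [NormedAddCommGroup V]
    [InnerProductSpace ℝ V] [FiniteDimensional ℝ V] [MeasurableSpace V] [BorelSpace V]
    {f : V → F} (hc : Continuous f) (hf : Integrable f) (h : 𝓕 f = 0) : f = 0 := by
  have h'f : Integrable (𝓕 f) := by rw [h]; exact integrable_zero _ _ _
  rw [← hc.fourierInv_fourier_eq hf h'f, h]
  ext w
  simp [Real.fourierInv_eq]

theorem fourier_eq_zero_of_eventually_eq_zero {g : ℝ → F} (hg : Integrable g)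
    (hgs : HasCompactSupport g) {τ₀ : ℝ} (h : ∀ᶠ τ in 𝓝 τ₀, 𝓕 g τ = 0) : 𝓕 g = 0 := by
  set H : ℂ → F := fun z => ∫ t : ℝ, cexp (-2 * π * I * z * t) • g t
  have hH : AnalyticOnNhd ℂ H Set.univ := analyticOnNhd_univ_iff_differentiable.2 <|
    (differentiable_integral_cexp_mul_smul hg hgs).comp (by fun_prop)
  have hH_ofReal (τ : ℝ) : H τ = 𝓕 g τ := by
    simp only [H, Real.fourier_eq', Real.inner_apply]
    congr with t
    push_cast
    ring_nf
  have hfreq : ∃ᶠ z in 𝓝[≠] (τ₀ : ℂ), H z = 0 := by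
    have hmap : Tendsto ofReal (𝓝[≠] τ₀) (𝓝[≠] (τ₀ : ℂ)) :=
      continuous_ofReal.continuousWithinAt.tendsto_nhdsWithin fun _ hτ => by simpa using hτ
    exact hmap.frequently ((h.filter_mono nhdsWithin_le_nhds).frequently.mono
      fun τ hτ => (hH_ofReal τ).trans hτ)
  funext τ
  rw [← hH_ofReal, hH.eqOn_zero_of_preconnected_of_frequently_eq_zero
    isPreconnected_univ (Set.mem_univ _) hfreq (Set.mem_univ _)]
  rfl

end Fourier

section LightRay

variable {F : Type*} [NormedAddCommGroup F] [NormedSpace ℂ F]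
  {E : Type*} [NormedAddCommGroup E] [InnerProductSpace ℝ E] [FiniteDimensional ℝ E]
  [MeasurableSpace E] [BorelSpace E]

noncomputable def lightRayTransform (β : ℝ × E → F) (ω y : E) : F := ∫ t, β (t, y - t • ω)

theorem fourier_fourier_inner_eq_fourier_lightRayTransform {β : ℝ × E → F}
    (hβ : Integrable β) (ω ξ : E) :
    𝓕 (fun t => 𝓕 (fun x => β (t, x)) ξ) ⟪ω, ξ⟫ = 𝓕 (lightRayTransform β ω) ξ := by
  rw [Measure.volume_eq_prod] at hβ
  have hshear : MeasurePreserving (fun p : ℝ × E => (p.1, p.2 - p.1 • ω))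
      (volume.prod volume) (volume.prod volume) :=
    (MeasurePreserving.id volume).skew_product (by fun_prop)
      (ae_of_all _ fun t => (measurePreserving_sub_right volume (t • ω)).map_eq)
  have hint : Integrable (fun p : ℝ × E => 𝐞 (-⟪p.2, ξ⟫) • β (p.1, p.2 - p.1 • ω))
      (volume.prod volume) :=
    ((hshear.integrable_comp hβ.aestronglyMeasurable).2 hβ).circle_smul
      (Real.continuous_fourierChar.comp (by fun_prop)).aestronglyMeasurable
  calc 𝓕 (fun t => 𝓕 (fun x => β (t, x)) ξ) ⟪ω, ξ⟫
      = ∫ t, ∫ y, 𝐞 (-⟪y, ξ⟫) • β (t, y - t • ω) := by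
        simp only [Real.fourier_eq]
        congr with t
        rw [Circle.smul_def, ← integral_smul, ← integral_sub_right_eq_self _ (t • ω)]
        congr with y
        rw [← Circle.smul_def, smul_smul, ← AddChar.map_add_eq_mul, inner_sub_left,
          real_inner_smul_left, Real.inner_apply]
        ring_nf
    _ = ∫ y, ∫ t, 𝐞 (-⟪y, ξ⟫) • β (t, y - t • ω) := integral_integral_swap hint
    _ = 𝓕 (lightRayTransform β ω) ξ := by
        simp only [Real.fourier_eq, lightRayTransform, Circle.smul_def, integral_smul]

variable [CompleteSpace F]

theorem fourier_slice_eq_zero_of_lightRayTransform_eq_zero (hE : 1 < Module.rank ℝ E)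
    {β : ℝ × E → F} (hβc : Continuous β) (hβs : HasCompactSupport β)
    (h : ∀ ω, ‖ω‖ = 1 → lightRayTransform β ω = 0) {ξ : E} (hξ : ξ ≠ 0) (t : ℝ) :
    𝓕 (fun x => β (t, x)) ξ = 0 := by
  have hfs : HasCompactSupport fun p : ℝ × E => 𝐞 (-⟪p.2, ξ⟫) • β p := hβs.smul_left
  have hgc : Continuous fun t => 𝓕 (fun x => β (t, x)) ξ :=
    hfs.continuous_integral_prodMk (by fun_prop)
  have hgi : Integrable fun t => 𝓕 (fun x => β (t, x)) ξ :=
    hgc.integrable_of_hasCompactSupport hfs.integral_prodMk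
  have hcone : ∀ᶠ τ in 𝓝 0, 𝓕 (fun t => 𝓕 (fun x => β (t, x)) ξ) τ = 0 := by
    filter_upwards [Metric.closedBall_mem_nhds (0 : ℝ) (norm_pos_iff.2 hξ)] with τ hτ
    obtain ⟨ω, hω, rfl⟩ := exists_norm_eq_one_inner_eq hE ξ (by simpa using hτ)
    rw [fourier_fourier_inner_eq_fourier_lightRayTransform
      (hβc.integrable_of_hasCompactSupport hβs), h ω hω]
    simp [Real.fourier_eq]
  exact congrFun (eq_zero_of_fourier_eq_zero hgc hgi
    (fourier_eq_zero_of_eventually_eq_zero hgi hfs.integral_prodMk hcone)) t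

theorem eq_zero_of_lightRayTransform_eq_zero (hE : 1 < Module.rank ℝ E)
    {β : ℝ × E → F} (hβc : Continuous β) (hβs : HasCompactSupport β)
    (h : ∀ ω, ‖ω‖ = 1 → lightRayTransform β ω = 0) : β = 0 := by
  have : Nontrivial E := rank_pos_iff_nontrivial.1 (zero_lt_one.trans hE)
  ext ⟨t, x⟩
  have hc : Continuous fun x => β (t, x) := by fun_prop
  have hi : Integrable fun x => β (t, x) :=
    hc.integrable_of_hasCompactSupport (hβs.comp_prodMk_right t)
  refine congrFun (eq_zero_of_fourier_eq_zero hc hi ?_) x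
  exact Continuous.ext_on (dense_compl_singleton 0)
    (VectorFourier.fourierIntegral_continuous Real.continuous_fourierChar continuous_inner hi)
    continuous_const fun ξ hξ =>
      fourier_slice_eq_zero_of_lightRayTransform_eq_zero hE hβc hβs h hξ t

end LightRay

/-- For `n ≥ 2`, if the light ray transform `∫ β(t, y − tω) dt` of a
continuous compactly supported `β : ℝ^{1+n} → ℂ` vanishes for every `y ∈ ℝⁿ` and every
unit vector `ω ∈ ℝⁿ`, then `β` vanishes identically. -/
theorem statement4 (n : ℕ) (hn : 2 ≤ n)
    (β : ℝ × EuclideanSpace ℝ (Fin n) → ℂ)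
    (hβc : Continuous β) (hβs : HasCompactSupport β)
    (h : ∀ (y ω : EuclideanSpace ℝ (Fin n)), ‖ω‖ = 1 →
      (∫ t : ℝ, β (t, y - t • ω)) = 0) :
    ∀ z : ℝ × EuclideanSpace ℝ (Fin n), β z = 0 := by
  have hrank : 1 < Module.rank ℝ (EuclideanSpace ℝ (Fin n)) := by
    rw [← Module.finrank_eq_rank, finrank_euclideanSpace_fin]
    exact_mod_cast hn
  exact congrFun <| eq_zero_of_lightRayTransform_eq_zero hrank hβc hβs fun ω hω =>
    funext fun y => h y ω hω
end

section
/- Let n ≥ 1, let ω ∈ ℝⁿ be a unit vector, let h ≠ 0 be real, and let φ : ℝⁿ → ℝ be continuously differentiable. Define u₊(t,x) = e^{−(t+⟨x,ω⟩)/h} φ(x + tω) and u₋(t,x) = e^{(t+⟨x,ω⟩)/h} φ(x + tω). Then for all (t,x): ⟨∇_{t,x}u₊(t,x), ∇_{t,x}u₋(t,x)⟩ = −(2/h²) φ(x+tω)² + ⟨ω, ∇φ(x+tω)⟩² + ‖∇φ(x+tω)‖². -/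
/-!
With `ℓ = (1, ω)` and the shear `A (t, x) = x + t ω`, one has `u± = e^{∓⟪ℓ, ·⟫/h} · (φ ∘ A)`, so
`∇u± = e^{∓⟪ℓ, z⟫/h} (A* ∇φ ∓ h⁻¹ φ ℓ)`. In `⟪∇u₊, ∇u₋⟫` the exponentials cancel and so do the
cross terms, leaving `‖A* ∇φ‖² - h⁻² φ² ‖ℓ‖²`; finally `A* g = (⟪ω, g⟫, g)` and `‖ℓ‖² = 2`.
-/

open scoped RealInnerProductSpace

section ExpInnerMulComp

variable {E F : Type*} [NormedAddCommGroup E] [InnerProductSpace ℝ E] [CompleteSpace E]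
  [NormedAddCommGroup F] [InnerProductSpace ℝ F] [CompleteSpace F]

theorem hasGradientAt_exp_inner_mul_comp {φ : F → ℝ} {g : F} (A : E →L[ℝ] F) (ℓ : E) (c : ℝ)
    {z : E} (hφ : HasGradientAt φ g (A z)) :
    HasGradientAt (fun w => Real.exp (c * ⟪ℓ, w⟫) * φ (A w))
      (Real.exp (c * ⟪ℓ, z⟫) • (ContinuousLinearMap.adjoint A g + (c * φ (A z)) • ℓ)) z := by
  have hexp : HasFDerivAt (fun w => Real.exp (c * ⟪ℓ, w⟫))
      (Real.exp (c * ⟪ℓ, z⟫) • c • innerSL ℝ ℓ) z :=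
    ((innerSL ℝ ℓ).hasFDerivAt.const_mul c).exp
  have hcomp := (hasGradientAt_iff_hasFDerivAt.mp hφ).comp z A.hasFDerivAt
  rw [hasGradientAt_iff_hasFDerivAt]
  refine (hexp.mul hcomp).congr_fderiv ?_
  ext v
  simp [ContinuousLinearMap.adjoint_inner_left]
  ring

theorem inner_gradient_exp_inner_mul_comp {φ : F → ℝ} {g : F} (A : E →L[ℝ] F) (ℓ : E) (c : ℝ)
    {z : E} (hφ : HasGradientAt φ g (A z)) :
    ⟪gradient (fun w => Real.exp (-c * ⟪ℓ, w⟫) * φ (A w)) z,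
      gradient (fun w => Real.exp (c * ⟪ℓ, w⟫) * φ (A w)) z⟫
      = ‖ContinuousLinearMap.adjoint A g‖ ^ 2 - (c * φ (A z)) ^ 2 * ‖ℓ‖ ^ 2 := by
  rw [(hasGradientAt_exp_inner_mul_comp A ℓ (-c) hφ).gradient,
    (hasGradientAt_exp_inner_mul_comp A ℓ c hφ).gradient]
  have hexp : Real.exp (-c * ⟪ℓ, z⟫) * Real.exp (c * ⟪ℓ, z⟫) = 1 := by
    rw [← Real.exp_add, neg_mul, neg_add_cancel, Real.exp_zero]
  simp only [real_inner_smul_left, real_inner_smul_right, inner_add_left, inner_add_right,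
    real_inner_comm ℓ, real_inner_self_eq_norm_sq]
  linear_combination (‖ContinuousLinearMap.adjoint A g‖ ^ 2 - (c * φ (A z)) ^ 2 * ‖ℓ‖ ^ 2) * hexp

end ExpInnerMulComp

namespace EuclideanSpace

variable {n : ℕ}

def cons (a : ℝ) (v : EuclideanSpace ℝ (Fin n)) : EuclideanSpace ℝ (Fin (n + 1)) :=
  WithLp.toLp 2 (Fin.cons a v)

theorem inner_cons_left (a : ℝ) (v : EuclideanSpace ℝ (Fin n))
    (z : EuclideanSpace ℝ (Fin (n + 1))) :
    ⟪cons a v, z⟫ = a * z 0 + ∑ i, v i * z i.succ := by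
  simp [cons, PiLp.inner_apply, Fin.sum_univ_succ, mul_comm]

theorem norm_sq_cons (a : ℝ) (v : EuclideanSpace ℝ (Fin n)) :
    ‖cons a v‖ ^ 2 = a ^ 2 + ‖v‖ ^ 2 := by
  simp [cons, EuclideanSpace.real_norm_sq_eq, Fin.sum_univ_succ]

noncomputable def shear (ω : EuclideanSpace ℝ (Fin n)) :
    EuclideanSpace ℝ (Fin (n + 1)) →L[ℝ] EuclideanSpace ℝ (Fin n) :=
  LinearMap.toContinuousLinearMap
    { toFun := fun z => WithLp.toLp 2 fun i => z i.succ + z 0 * ω i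
      map_add' := fun x y => by ext i; simp only [PiLp.add_apply]; ring
      map_smul' := fun c x => by
        ext i; simp only [PiLp.smul_apply, smul_eq_mul, RingHom.id_apply]; ring }

theorem shear_apply (ω : EuclideanSpace ℝ (Fin n)) (z : EuclideanSpace ℝ (Fin (n + 1)))
    (i : Fin n) : shear ω z i = z i.succ + z 0 * ω i :=
  rfl

theorem adjoint_shear (ω g : EuclideanSpace ℝ (Fin n)) :
    ContinuousLinearMap.adjoint (shear ω) g = cons ⟪ω, g⟫ g := by
  refine ext_inner_right ℝ fun z => ?_
  rw [ContinuousLinearMap.adjoint_inner_left, inner_cons_left]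
  simp only [PiLp.inner_apply, shear_apply, RCLike.inner_apply, conj_trivial, Finset.sum_mul,
    ← Finset.sum_add_distrib]
  exact Finset.sum_congr rfl fun i _ => by ring

end EuclideanSpace

open EuclideanSpace

theorem statement11_general (n : ℕ)
    (ω : EuclideanSpace ℝ (Fin n)) (hω : ‖ω‖ = 1)
    (h : ℝ)
    (φ : EuclideanSpace ℝ (Fin n) → ℝ) (hφ : ContDiff ℝ 1 φ)
    (X : EuclideanSpace ℝ (Fin (n + 1)) → EuclideanSpace ℝ (Fin n))
    (hX : ∀ z i, X z i = z i.succ)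
    (uP uM : EuclideanSpace ℝ (Fin (n + 1)) → ℝ)
    (huP : ∀ z, uP z =
      Real.exp (-(z 0 + ∑ i : Fin n, z i.succ * ω i) / h) * φ (X z + z 0 • ω))
    (huM : ∀ z, uM z =
      Real.exp ((z 0 + ∑ i : Fin n, z i.succ * ω i) / h) * φ (X z + z 0 • ω)) :
    ∀ z : EuclideanSpace ℝ (Fin (n + 1)),
      ⟪gradient uP z, gradient uM z⟫
      = -(2 / h ^ 2) * (φ (X z + z 0 • ω)) ^ 2
        + (⟪ω, gradient φ (X z + z 0 • ω)⟫) ^ 2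
        + ‖gradient φ (X z + z 0 • ω)‖ ^ 2 := by
  have hA : ∀ z, X z + z 0 • ω = shear ω z := fun z => by
    ext i; simp [shear_apply, hX, mul_comm]
  have hL : ∀ z : EuclideanSpace ℝ (Fin (n + 1)),
      z 0 + ∑ i : Fin n, z i.succ * ω i = ⟪cons 1 ω, z⟫ := fun z => by
    simp [inner_cons_left, mul_comm]
  have huP' : uP = fun w => Real.exp (-h⁻¹ * ⟪cons 1 ω, w⟫) * φ (shear ω w) := by
    funext w; rw [huP, hA, hL, neg_div, div_eq_inv_mul, neg_mul]
  have huM' : uM = fun w => Real.exp (h⁻¹ * ⟪cons 1 ω, w⟫) * φ (shear ω w) := by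
    funext w; rw [huM, hA, hL, div_eq_inv_mul]
  intro z
  have hφz := ((hφ.differentiable one_ne_zero) (shear ω z)).hasGradientAt
  rw [hA, huP', huM', inner_gradient_exp_inner_mul_comp _ _ _ hφz, adjoint_shear,
    norm_sq_cons, norm_sq_cons, hω]
  ring

/-- For a unit vector `ω ∈ ℝⁿ`, `h ≠ 0` and `φ : ℝⁿ → ℝ` continuously
differentiable, with `uP(t,x) = e^{−(t+⟪x,ω⟫)/h} φ(x+tω)` and
`uM(t,x) = e^{(t+⟪x,ω⟫)/h} φ(x+tω)`, one has
`⟪∇uP, ∇uM⟫ = −(2/h²) φ(x+tω)² + ⟪ω, ∇φ(x+tω)⟫² + ‖∇φ(x+tω)‖²` at every point.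
Here `ℝ^{1+n} = EuclideanSpace ℝ (Fin (n+1))`, coordinate `0` is `t`, the map `X` with
`X z i = z i.succ` recovers `x`, and `∇` (via `gradient`) denotes the full gradient of
`u±` in all `1+n` variables and `∇φ` the gradient of `φ` on `ℝⁿ`. -/
theorem statement11 (n : ℕ) (hn : 1 ≤ n)
    (ω : EuclideanSpace ℝ (Fin n)) (hω : ‖ω‖ = 1)
    (h : ℝ) (hh : h ≠ 0)
    (φ : EuclideanSpace ℝ (Fin n) → ℝ) (hφ : ContDiff ℝ 1 φ)
    (X : EuclideanSpace ℝ (Fin (n + 1)) → EuclideanSpace ℝ (Fin n))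
    (hX : ∀ z i, X z i = z i.succ)
    (uP uM : EuclideanSpace ℝ (Fin (n + 1)) → ℝ)
    (huP : ∀ z, uP z =
      Real.exp (-(z 0 + ∑ i : Fin n, z i.succ * ω i) / h) * φ (X z + z 0 • ω))
    (huM : ∀ z, uM z =
      Real.exp ((z 0 + ∑ i : Fin n, z i.succ * ω i) / h) * φ (X z + z 0 • ω)) :
    ∀ z : EuclideanSpace ℝ (Fin (n + 1)),
      ⟪gradient uP z, gradient uM z⟫
      = -(2 / h ^ 2) * (φ (X z + z 0 • ω)) ^ 2
        + (⟪ω, gradient φ (X z + z 0 • ω)⟫) ^ 2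
        + ‖gradient φ (X z + z 0 • ω)‖ ^ 2 :=
  statement11_general n ω hω h φ hφ X hX uP uM huP huM
end
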